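/- arXiv:1102.1518 — 5 statements merged into one kernel-verified Lean document; each statement's English description precedes it below -/
import Mathlib

section
/- Let a₁, a₂, a₃ ∈ ℝ and consider on the interval J = (max(a₁,a₂,a₃), ∞) the functions f_i(x) = ((x-a_j)(x-a_k))^{1/4}/(x-a_i)^{1/4} (cyclic (i,j,k)) and h(x) = (1/2)((x-a₁)(x-a₂)(x-a₃))^{-1/4}. Then on J: d/dx (f₁f₂) = h·f₃, d/dx (f₁f₃) = h·f₂, and d/dx (f₂f₃) = h·f₁. -/
/-- The BGPP function with denominator `x - a` and numerator factors `x - b`, `x - c`. -/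
noncomputable def bgppF (a b c : ℝ) (x : ℝ) : ℝ :=
  ((x - b) * (x - c)) ^ ((1:ℝ)/4) / (x - a) ^ ((1:ℝ)/4)

/-- h(x) = (1/2)((x-a₁)(x-a₂)(x-a₃))^{-1/4}. -/
noncomputable def bgppH (a₁ a₂ a₃ : ℝ) (x : ℝ) : ℝ :=
  (1/2) * ((x - a₁) * (x - a₂) * (x - a₃)) ^ (-(1:ℝ)/4)

/-!
Two of the three functions `f` multiply to a square root: `f₁ f₂ = √(x - a₃)`, since the fourth
roots of `x - a₁` and `x - a₂` cancel and that of `x - a₃` appears twice. Likewise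
`h f₃ = 1 / (2 √(x - a₃))`, which is the derivative of `√(x - a₃)`. The other two identities are
the same one after permuting `a₁, a₂, a₃`, under which `h` is invariant.
-/

open Real

lemma Real.rpow_quarter_mul_self {t : ℝ} (ht : 0 ≤ t) : t ^ (1 / 4 : ℝ) * t ^ (1 / 4 : ℝ) = √t := by
  rw [← rpow_add' ht (by norm_num), sqrt_eq_rpow]
  norm_num

lemma bgppF_comm (a b c : ℝ) : bgppF a b c = bgppF a c b := by
  funext x
  rw [bgppF, bgppF, mul_comm (x - b)]

lemma bgppH_comm (a b c : ℝ) : bgppH a b c = bgppH a c b := by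
  funext x
  rw [bgppH, bgppH, mul_right_comm]

lemma bgppH_rotate (a b c : ℝ) : bgppH a b c = bgppH b c a := by
  funext x
  rw [bgppH, bgppH, mul_rotate]

section
variable {a b c x : ℝ}

lemma bgppF_mul_bgppF (ha : a < x) (hb : b < x) (hc : c < x) :
    bgppF a b c x * bgppF b c a x = √(x - c) := by
  have pa : 0 < x - a := sub_pos.2 ha
  have pb : 0 < x - b := sub_pos.2 hb
  have pc : 0 < x - c := sub_pos.2 hc
  have qa : 0 < (x - a) ^ (1 / 4 : ℝ) := rpow_pos_of_pos pa _
  have qb : 0 < (x - b) ^ (1 / 4 : ℝ) := rpow_pos_of_pos pb _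
  rw [bgppF, bgppF, mul_rpow pb.le pc.le, mul_rpow pc.le pa.le, ← rpow_quarter_mul_self pc.le]
  field_simp

lemma bgppH_mul_bgppF (ha : a < x) (hb : b < x) (hc : c < x) :
    bgppH a b c x * bgppF c a b x = 1 / (2 * √(x - c)) := by
  have pa : 0 < x - a := sub_pos.2 ha
  have pb : 0 < x - b := sub_pos.2 hb
  have pc : 0 < x - c := sub_pos.2 hc
  have qa : 0 < (x - a) ^ (1 / 4 : ℝ) := rpow_pos_of_pos pa _
  have qb : 0 < (x - b) ^ (1 / 4 : ℝ) := rpow_pos_of_pos pb _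
  have qc : 0 < (x - c) ^ (1 / 4 : ℝ) := rpow_pos_of_pos pc _
  rw [bgppH, bgppF, neg_div, rpow_neg (by positivity), mul_rpow (by positivity) pc.le,
    mul_rpow pa.le pb.le, ← rpow_quarter_mul_self pc.le]
  field_simp

lemma hasDerivAt_bgppF_mul_bgppF (ha : a < x) (hb : b < x) (hc : c < x) :
    HasDerivAt (fun y => bgppF a b c y * bgppF b c a y) (bgppH a b c x * bgppF c a b x) x := by
  have hsqrt : HasDerivAt (fun y => √(y - c)) (1 / (2 * √(x - c))) x :=
    ((hasDerivAt_id x).sub_const c).sqrt (sub_pos.2 hc).ne'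
  rw [bgppH_mul_bgppF ha hb hc]
  refine hsqrt.congr_of_eventuallyEq ?_
  filter_upwards [eventually_gt_nhds ha, eventually_gt_nhds hb, eventually_gt_nhds hc]
    with y hya hyb hyc
  exact bgppF_mul_bgppF hya hyb hyc

end

/-- on J = (max(a₁,a₂,a₃),∞) the BGPP functions satisfy
(f₁f₂)' = h f₃, (f₁f₃)' = h f₂, (f₂f₃)' = h f₁. -/
theorem stmt_2 (a₁ a₂ a₃ : ℝ) (x : ℝ) (h1 : a₁ < x) (h2 : a₂ < x) (h3 : a₃ < x) :
    HasDerivAt (fun y => bgppF a₁ a₂ a₃ y * bgppF a₂ a₃ a₁ y)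
      (bgppH a₁ a₂ a₃ x * bgppF a₃ a₁ a₂ x) x ∧
    HasDerivAt (fun y => bgppF a₁ a₂ a₃ y * bgppF a₃ a₁ a₂ y)
      (bgppH a₁ a₂ a₃ x * bgppF a₂ a₃ a₁ x) x ∧
    HasDerivAt (fun y => bgppF a₂ a₃ a₁ y * bgppF a₃ a₁ a₂ y)
      (bgppH a₁ a₂ a₃ x * bgppF a₁ a₂ a₃ x) x := by
  refine ⟨hasDerivAt_bgppF_mul_bgppF h1 h2 h3, ?_, ?_⟩
  · have h132 := hasDerivAt_bgppF_mul_bgppF h1 h3 h2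
    rwa [bgppF_comm a₁ a₃ a₂, bgppF_comm a₃ a₂ a₁, bgppF_comm a₂ a₁ a₃, ← bgppH_comm] at h132
  · rw [bgppH_rotate]
    exact hasDerivAt_bgppF_mul_bgppF h2 h3 h1
end

section
/- Let a ∈ ℝ and define on the interval I = {t > 0 : t⁴ > a} the functions f₁(t) = f₂(t) = t/2, f₃(t) = (t⁴ - a)^{1/2}/(2t), and f(t) = (t⁴/(t⁴-a))^{1/2}. Then on I: d/dt(f₁f₂) = f·f₃, d/dt(f₁f₃) = f·f₂, and d/dt(f₂f₃) = f·f₁. -/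
/-! Since `f = t² / √(t⁴ - a)`, one has `f f₃ = t / 2 = (t² / 4)'`, while
`f₁ f₃ = f₂ f₃ = √(t⁴ - a) / 4` for `t ≠ 0`, whose derivative `t³ / (2 √(t⁴ - a))` is `f · t / 2`. -/

open Real Filter Topology

lemma sqrt_pow_four_div (t c : ℝ) : √(t ^ 4 / c) = t ^ 2 / √c := by
  rw [sqrt_div (by positivity), show t ^ 4 = (t ^ 2) ^ 2 by ring, sqrt_sq (by positivity)]

lemma hasDerivAt_sqrt_pow_four_sub {a t : ℝ} (hta : a < t ^ 4) :
    HasDerivAt (fun s => √(s ^ 4 - a)) (2 * t ^ 3 / √(t ^ 4 - a)) t := by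
  convert ((hasDerivAt_pow 4 t).sub_const a).sqrt (sub_ne_zero.2 hta.ne') using 1
  ring

lemma half_mul_div_two_mul {x : ℝ} (hx : x ≠ 0) (y : ℝ) : x / 2 * (y / (2 * x)) = y / 4 := by
  field_simp
  ring

/-- Eguchi–Hanson data f₁ = f₂ = t/2, f₃ = (t⁴-a)^{1/2}/(2t),
f = (t⁴/(t⁴-a))^{1/2} solve (f₁f₂)' = f f₃, (f₁f₃)' = f f₂, (f₂f₃)' = f f₁. -/
theorem stmt_3 (a : ℝ) (t : ℝ) (ht : 0 < t) (hta : a < t ^ 4) :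
    HasDerivAt (fun s => (s / 2) * (s / 2))
      (Real.sqrt (t ^ 4 / (t ^ 4 - a)) * (Real.sqrt (t ^ 4 - a) / (2 * t))) t ∧
    HasDerivAt (fun s => (s / 2) * (Real.sqrt (s ^ 4 - a) / (2 * s)))
      (Real.sqrt (t ^ 4 / (t ^ 4 - a)) * (t / 2)) t ∧
    HasDerivAt (fun s => (s / 2) * (Real.sqrt (s ^ 4 - a) / (2 * s)))
      (Real.sqrt (t ^ 4 / (t ^ 4 - a)) * (t / 2)) t := by
  have hc : 0 < √(t ^ 4 - a) := sqrt_pos.2 (sub_pos.2 hta)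
  have h₁₂ : HasDerivAt (fun s => (s / 2) * (s / 2))
      (√(t ^ 4 / (t ^ 4 - a)) * (√(t ^ 4 - a) / (2 * t))) t := by
    refine (((hasDerivAt_id' t).div_const 2).mul ((hasDerivAt_id' t).div_const 2)).congr_deriv ?_
    rw [sqrt_pow_four_div]
    field_simp
    ring
  have h₁₃ : HasDerivAt (fun s => (s / 2) * (√(s ^ 4 - a) / (2 * s)))
      (√(t ^ 4 / (t ^ 4 - a)) * (t / 2)) t := by
    have hloc :
        (fun s => (s / 2) * (√(s ^ 4 - a) / (2 * s))) =ᶠ[𝓝 t] fun s => √(s ^ 4 - a) / 4 :=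
      (eventually_ne_nhds ht.ne').mono fun s hs => half_mul_div_two_mul hs _
    refine (((hasDerivAt_sqrt_pow_four_sub hta).div_const 4).congr_of_eventuallyEq hloc).congr_deriv
      ?_
    rw [sqrt_pow_four_div]
    field_simp
    ring
  exact ⟨h₁₂, h₁₃, h₁₃⟩
end

section
/- Let a > 0 and define on the interval I = {t : 0 < t⁴ < a} the functions f₁(t) = f₂(t) = (1/2)(a - t⁴)^{1/4}, f₃(t) = (t²/2)(a - t⁴)^{-1/4}, and f(t) = t(a - t⁴)^{-1/4}. Then on I: d/dt(f₁f₂) = -f·f₃, d/dt(f₁f₃) = f·f₂, and d/dt(f₂f₃) = f·f₁. -/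
/-!
On `I` we have `f₁ f₂ = ¼ (a - t⁴)^{1/2}` and `f₁ f₃ = f₂ f₃ = t²/4`, because the fourth roots
cancel. Differentiating these two closed forms gives `-t³/2 · (a - t⁴)^{-1/2} = -f f₃` and
`t/2 = f f₁ = f f₂`.
-/

open Filter Topology

lemma rpow_mul_rpow_of_add_eq {x p q r : ℝ} (hx : 0 < x) (h : p + q = r) :
    x ^ p * x ^ q = x ^ r := by
  rw [← Real.rpow_add hx, h]

section

variable {a t : ℝ}

lemma eventually_sub_pow_four_pos (hta : t ^ 4 < a) : ∀ᶠ s in 𝓝 t, 0 < a - s ^ 4 :=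
  ((continuous_pow 4).continuousAt.eventually_lt continuousAt_const hta).mono
    fun _ hs => sub_pos.2 hs

lemma hasDerivAt_sub_pow_four_rpow (p : ℝ) (hta : t ^ 4 < a) :
    HasDerivAt (fun s => (a - s ^ 4) ^ p) (-(4 * t ^ 3) * p * (a - t ^ 4) ^ (p - 1)) t := by
  have hpow : HasDerivAt (fun s => a - s ^ 4) (-(4 * t ^ 3)) t := by
    simpa using (hasDerivAt_pow 4 t).const_sub a
  exact hpow.rpow_const (Or.inl (sub_pos.2 hta).ne')

lemma hasDerivAt_mul_self_half_rpow_quarter (hta : t ^ 4 < a) :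
    HasDerivAt (fun s => ((1/2) * (a - s ^ 4) ^ ((1:ℝ)/4)) * ((1/2) * (a - s ^ 4) ^ ((1:ℝ)/4)))
      (-(t * (a - t ^ 4) ^ (-(1:ℝ)/4) * (t ^ 2 / 2 * (a - t ^ 4) ^ (-(1:ℝ)/4)))) t := by
  have hu : 0 < a - t ^ 4 := sub_pos.2 hta
  have hclosed : (fun s => ((1/2) * (a - s ^ 4) ^ ((1:ℝ)/4)) * ((1/2) * (a - s ^ 4) ^ ((1:ℝ)/4)))
      =ᶠ[𝓝 t] fun s => (1/4) * (a - s ^ 4) ^ ((1:ℝ)/2) := by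
    filter_upwards [eventually_sub_pow_four_pos hta] with s hs
    rw [mul_mul_mul_comm, rpow_mul_rpow_of_add_eq hs (by norm_num : (1:ℝ)/4 + 1/4 = 1/2)]
    norm_num
  refine (((hasDerivAt_sub_pow_four_rpow _ hta).const_mul (1/4)).congr_of_eventuallyEq
    hclosed).congr_deriv ?_
  rw [← rpow_mul_rpow_of_add_eq hu (by norm_num : -(1:ℝ)/4 + -(1:ℝ)/4 = 1/2 - 1)]
  ring

lemma hasDerivAt_half_rpow_quarter_mul_sq_half_rpow_neg_quarter (hta : t ^ 4 < a) :
    HasDerivAt (fun s => ((1/2) * (a - s ^ 4) ^ ((1:ℝ)/4)) * (s ^ 2 / 2 * (a - s ^ 4) ^ (-(1:ℝ)/4)))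
      (t * (a - t ^ 4) ^ (-(1:ℝ)/4) * ((1/2) * (a - t ^ 4) ^ ((1:ℝ)/4))) t := by
  have hcancel : ∀ {x : ℝ}, 0 < x → x ^ ((1:ℝ)/4) * x ^ (-(1:ℝ)/4) = 1 := fun hx => by
    rw [rpow_mul_rpow_of_add_eq hx (by norm_num : (1:ℝ)/4 + -(1:ℝ)/4 = 0), Real.rpow_zero]
  have hclosed : (fun s => ((1/2) * (a - s ^ 4) ^ ((1:ℝ)/4)) * (s ^ 2 / 2 * (a - s ^ 4) ^ (-(1:ℝ)/4)))
      =ᶠ[𝓝 t] fun s => s ^ 2 / 4 := by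
    filter_upwards [eventually_sub_pow_four_pos hta] with s hs
    linear_combination (s ^ 2 / 4) * hcancel hs
  refine (((hasDerivAt_pow 2 t).div_const 4).congr_of_eventuallyEq hclosed).congr_deriv ?_
  push_cast
  linear_combination (-t / 2) * hcancel (sub_pos.2 hta)

end

theorem stmt_4_general (a : ℝ) (t : ℝ) (hta : t ^ 4 < a) :
    HasDerivAt (fun s => ((1/2) * (a - s ^ 4) ^ ((1:ℝ)/4)) * ((1/2) * (a - s ^ 4) ^ ((1:ℝ)/4)))
      (-(t * (a - t ^ 4) ^ (-(1:ℝ)/4) * (t ^ 2 / 2 * (a - t ^ 4) ^ (-(1:ℝ)/4)))) t ∧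
    HasDerivAt (fun s => ((1/2) * (a - s ^ 4) ^ ((1:ℝ)/4)) * (s ^ 2 / 2 * (a - s ^ 4) ^ (-(1:ℝ)/4)))
      (t * (a - t ^ 4) ^ (-(1:ℝ)/4) * ((1/2) * (a - t ^ 4) ^ ((1:ℝ)/4))) t ∧
    HasDerivAt (fun s => ((1/2) * (a - s ^ 4) ^ ((1:ℝ)/4)) * (s ^ 2 / 2 * (a - s ^ 4) ^ (-(1:ℝ)/4)))
      (t * (a - t ^ 4) ^ (-(1:ℝ)/4) * ((1/2) * (a - t ^ 4) ^ ((1:ℝ)/4))) t :=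
  ⟨hasDerivAt_mul_self_half_rpow_quarter hta,
    hasDerivAt_half_rpow_quarter_mul_sq_half_rpow_neg_quarter hta,
    hasDerivAt_half_rpow_quarter_mul_sq_half_rpow_neg_quarter hta⟩

/-- on 0 < t⁴ < a, the functions f₁ = f₂ = (1/2)(a-t⁴)^{1/4},
f₃ = (t²/2)(a-t⁴)^{-1/4}, f = t(a-t⁴)^{-1/4} satisfy
(f₁f₂)' = -f f₃, (f₁f₃)' = f f₂, (f₂f₃)' = f f₁. -/
theorem stmt_4 (a : ℝ) (ha : 0 < a) (t : ℝ) (ht : 0 < t) (hta : t ^ 4 < a) :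
    HasDerivAt (fun s => ((1/2) * (a - s ^ 4) ^ ((1:ℝ)/4)) * ((1/2) * (a - s ^ 4) ^ ((1:ℝ)/4)))
      (-(t * (a - t ^ 4) ^ (-(1:ℝ)/4) * (t ^ 2 / 2 * (a - t ^ 4) ^ (-(1:ℝ)/4)))) t ∧
    HasDerivAt (fun s => ((1/2) * (a - s ^ 4) ^ ((1:ℝ)/4)) * (s ^ 2 / 2 * (a - s ^ 4) ^ (-(1:ℝ)/4)))
      (t * (a - t ^ 4) ^ (-(1:ℝ)/4) * ((1/2) * (a - t ^ 4) ^ ((1:ℝ)/4))) t ∧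
    HasDerivAt (fun s => ((1/2) * (a - s ^ 4) ^ ((1:ℝ)/4)) * (s ^ 2 / 2 * (a - s ^ 4) ^ (-(1:ℝ)/4)))
      (t * (a - t ^ 4) ^ (-(1:ℝ)/4) * ((1/2) * (a - t ^ 4) ^ ((1:ℝ)/4))) t :=
  stmt_4_general a t hta
end

section
/- Let f₁, f₂, f₃ : I → ℝ be differentiable positive functions on an interval I and f : I → ℝ nonvanishing, satisfying (f₁f₂)' = f f₃, (f₁f₃)' = f f₂, (f₂f₃)' = f f₁. Then f₁' = f (f₂² + f₃² - f₁²)/(2 f₂ f₃), f₂' = f (f₃² + f₁² - f₂²)/(2 f₁ f₃), and f₃' = f (f₁² + f₂² - f₃²)/(2 f₁ f₂). -/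
/-! By the product rule the three hypotheses form a linear system in `(f₁', f₂', f₃')`.
Multiplying the equations by `f₃, f₂, f₁` and adding them with signs `+, +, -` isolates
`2 f₂ f₃ f₁' = f (f₂² + f₃² - f₁²)`, and cyclically for the other two derivatives. -/

theorem bgpp_of_product_system {a b c a' b' c' F : ℝ} (ha : a ≠ 0) (hb : b ≠ 0) (hc : c ≠ 0)
    (hab : a' * b + a * b' = F * c) (hac : a' * c + a * c' = F * b)
    (hbc : b' * c + b * c' = F * a) :
    a' = F * (b ^ 2 + c ^ 2 - a ^ 2) / (2 * b * c) ∧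
      b' = F * (c ^ 2 + a ^ 2 - b ^ 2) / (2 * a * c) ∧
      c' = F * (a ^ 2 + b ^ 2 - c ^ 2) / (2 * a * b) := by
  refine ⟨?_, ?_, ?_⟩ <;> field_simp
  · linear_combination c * hab + b * hac - a * hbc
  · linear_combination c * hab - b * hac + a * hbc
  · linear_combination -c * hab + b * hac + a * hbc

theorem stmt_12_general (I : Set ℝ)
    (f₁ f₂ f₃ f : ℝ → ℝ)
    (hdf₁ : ∀ t ∈ I, DifferentiableAt ℝ f₁ t)
    (hdf₂ : ∀ t ∈ I, DifferentiableAt ℝ f₂ t)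
    (hdf₃ : ∀ t ∈ I, DifferentiableAt ℝ f₃ t)
    (hpos₁ : ∀ t ∈ I, 0 < f₁ t) (hpos₂ : ∀ t ∈ I, 0 < f₂ t) (hpos₃ : ∀ t ∈ I, 0 < f₃ t)
    (h12 : ∀ t ∈ I, deriv (fun s => f₁ s * f₂ s) t = f t * f₃ t)
    (h13 : ∀ t ∈ I, deriv (fun s => f₁ s * f₃ s) t = f t * f₂ t)
    (h23 : ∀ t ∈ I, deriv (fun s => f₂ s * f₃ s) t = f t * f₁ t) :
    ∀ t ∈ I,
      deriv f₁ t = f t * (f₂ t ^ 2 + f₃ t ^ 2 - f₁ t ^ 2) / (2 * f₂ t * f₃ t) ∧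
      deriv f₂ t = f t * (f₃ t ^ 2 + f₁ t ^ 2 - f₂ t ^ 2) / (2 * f₁ t * f₃ t) ∧
      deriv f₃ t = f t * (f₁ t ^ 2 + f₂ t ^ 2 - f₃ t ^ 2) / (2 * f₁ t * f₂ t) := by
  intro t ht
  have e12 := h12 t ht
  have e13 := h13 t ht
  have e23 := h23 t ht
  rw [deriv_fun_mul (hdf₁ t ht) (hdf₂ t ht)] at e12
  rw [deriv_fun_mul (hdf₁ t ht) (hdf₃ t ht)] at e13
  rw [deriv_fun_mul (hdf₂ t ht) (hdf₃ t ht)] at e23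
  exact bgpp_of_product_system (hpos₁ t ht).ne' (hpos₂ t ht).ne' (hpos₃ t ht).ne' e12 e13 e23

/-- the product-form system (f₁f₂)' = f f₃, (f₁f₃)' = f f₂, (f₂f₃)' = f f₁
implies the BGPP system fᵢ' = f (f_j² + f_k² - f_i²)/(2 f_j f_k). -/
theorem stmt_12 (I : Set ℝ) (hI : IsOpen I) (hIconn : I.OrdConnected)
    (f₁ f₂ f₃ f : ℝ → ℝ)
    (hdf₁ : ∀ t ∈ I, DifferentiableAt ℝ f₁ t)
    (hdf₂ : ∀ t ∈ I, DifferentiableAt ℝ f₂ t)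
    (hdf₃ : ∀ t ∈ I, DifferentiableAt ℝ f₃ t)
    (hfne : ∀ t ∈ I, f t ≠ 0)
    (hpos₁ : ∀ t ∈ I, 0 < f₁ t) (hpos₂ : ∀ t ∈ I, 0 < f₂ t) (hpos₃ : ∀ t ∈ I, 0 < f₃ t)
    (h12 : ∀ t ∈ I, deriv (fun s => f₁ s * f₂ s) t = f t * f₃ t)
    (h13 : ∀ t ∈ I, deriv (fun s => f₁ s * f₃ s) t = f t * f₂ t)
    (h23 : ∀ t ∈ I, deriv (fun s => f₂ s * f₃ s) t = f t * f₁ t) :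
    ∀ t ∈ I,
      deriv f₁ t = f t * (f₂ t ^ 2 + f₃ t ^ 2 - f₁ t ^ 2) / (2 * f₂ t * f₃ t) ∧
      deriv f₂ t = f t * (f₃ t ^ 2 + f₁ t ^ 2 - f₂ t ^ 2) / (2 * f₁ t * f₃ t) ∧
      deriv f₃ t = f t * (f₁ t ^ 2 + f₂ t ^ 2 - f₃ t ^ 2) / (2 * f₁ t * f₂ t) :=
  stmt_12_general I f₁ f₂ f₃ f hdf₁ hdf₂ hdf₃ hpos₁ hpos₂ hpos₃ h12 h13 h23
end

section
/- Let a₁, a₂, a₃ ∈ ℝ with a₂ < a₃, and consider x in the interval (max(a₁,a₂), a₃) with x > a₁, x > a₂. Define f₁(x) = ((x-a₂)(a₃-x))^{1/4}/(x-a₁)^{1/4}, f₂(x) = ((x-a₁)(a₃-x))^{1/4}/(x-a₂)^{1/4}, f₃(x) = ((x-a₁)(x-a₂))^{1/4}/(a₃-x)^{1/4}, and h(x) = (1/2)((x-a₁)(x-a₂)(a₃-x))^{-1/4}. Then d/dx(f₁f₂) = -h·f₃, d/dx(f₁f₃) = h·f₂, and d/dx(f₂f₃) = h·f₁. -/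
/-! Each product `fᵢ fⱼ` collapses to a single square root, `f₁ f₂ = √(a₃ - x)`,
`f₁ f₃ = √(x - a₂)`, `f₂ f₃ = √(x - a₁)`, and `h fₖ` collapses to `1 / (2 √·)` of the
same factor, so the three equations are the derivative of `√` of an affine function. -/

open Topology

namespace Real

lemma rpow_quarter_mul_self_s18 {r : ℝ} (hr : 0 ≤ r) :
    r ^ ((1:ℝ)/4) * r ^ ((1:ℝ)/4) = √r := by
  rw [← rpow_add' hr (by norm_num), sqrt_eq_rpow]
  norm_num

lemma rpow_quarter_div_mul_rpow_quarter_div {p q r : ℝ} (hp : 0 < p) (hq : 0 < q) (hr : 0 ≤ r) :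
    (q * r) ^ ((1:ℝ)/4) / p ^ ((1:ℝ)/4) * ((p * r) ^ ((1:ℝ)/4) / q ^ ((1:ℝ)/4)) = √r := by
  have hp4 := (rpow_pos_of_pos hp ((1:ℝ)/4)).ne'
  have hq4 := (rpow_pos_of_pos hq ((1:ℝ)/4)).ne'
  rw [mul_rpow hq.le hr, mul_rpow hp.le hr, ← rpow_quarter_mul_self_s18 hr]
  field_simp

lemma rpow_neg_quarter_mul_rpow_quarter_div {p q r : ℝ} (hp : 0 < p) (hq : 0 < q) (hr : 0 < r) :
    (p * q * r) ^ (-(1:ℝ)/4) * ((p * q) ^ ((1:ℝ)/4) / r ^ ((1:ℝ)/4)) = (√r)⁻¹ := by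
  have hp4 := (rpow_pos_of_pos hp ((1:ℝ)/4)).ne'
  have hq4 := (rpow_pos_of_pos hq ((1:ℝ)/4)).ne'
  have hr4 := (rpow_pos_of_pos hr ((1:ℝ)/4)).ne'
  rw [neg_div, rpow_neg (by positivity), mul_rpow (by positivity) hr.le, mul_rpow hp.le hq.le,
    ← rpow_quarter_mul_self_s18 hr.le]
  field_simp

end Real

theorem stmt_18_general (a₁ a₂ a₃ : ℝ) (x : ℝ)
    (h1 : a₁ < x) (h2 : a₂ < x) (h3 : x < a₃) :
    HasDerivAt (fun y => (((y - a₂) * (a₃ - y)) ^ ((1:ℝ)/4) / (y - a₁) ^ ((1:ℝ)/4)) *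
        (((y - a₁) * (a₃ - y)) ^ ((1:ℝ)/4) / (y - a₂) ^ ((1:ℝ)/4)))
      (-((1/2) * ((x - a₁) * (x - a₂) * (a₃ - x)) ^ (-(1:ℝ)/4) *
        (((x - a₁) * (x - a₂)) ^ ((1:ℝ)/4) / (a₃ - x) ^ ((1:ℝ)/4)))) x ∧
    HasDerivAt (fun y => (((y - a₂) * (a₃ - y)) ^ ((1:ℝ)/4) / (y - a₁) ^ ((1:ℝ)/4)) *
        (((y - a₁) * (y - a₂)) ^ ((1:ℝ)/4) / (a₃ - y) ^ ((1:ℝ)/4)))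
      ((1/2) * ((x - a₁) * (x - a₂) * (a₃ - x)) ^ (-(1:ℝ)/4) *
        (((x - a₁) * (a₃ - x)) ^ ((1:ℝ)/4) / (x - a₂) ^ ((1:ℝ)/4))) x ∧
    HasDerivAt (fun y => (((y - a₁) * (a₃ - y)) ^ ((1:ℝ)/4) / (y - a₂) ^ ((1:ℝ)/4)) *
        (((y - a₁) * (y - a₂)) ^ ((1:ℝ)/4) / (a₃ - y) ^ ((1:ℝ)/4)))
      ((1/2) * ((x - a₁) * (x - a₂) * (a₃ - x)) ^ (-(1:ℝ)/4) *
        (((x - a₂) * (a₃ - x)) ^ ((1:ℝ)/4) / (x - a₁) ^ ((1:ℝ)/4))) x := by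
  have hp : 0 < x - a₁ := sub_pos.mpr h1
  have hq : 0 < x - a₂ := sub_pos.mpr h2
  have hr : 0 < a₃ - x := sub_pos.mpr h3
  have near : ∀ᶠ y in 𝓝 x, 0 < y - a₁ ∧ 0 < y - a₂ ∧ 0 < a₃ - y :=
    (eventually_gt_nhds h1).and ((eventually_gt_nhds h2).and (eventually_lt_nhds h3))
      |>.mono fun y ⟨hy1, hy2, hy3⟩ => ⟨sub_pos.mpr hy1, sub_pos.mpr hy2, sub_pos.mpr hy3⟩
  refine ⟨?_, ?_, ?_⟩
  · have hd := ((hasDerivAt_id' x).const_sub a₃).sqrt hr.ne'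
    refine (hd.congr_of_eventuallyEq ?_).congr_deriv ?_
    · filter_upwards [near] with y ⟨hy1, hy2, hy3⟩
      exact Real.rpow_quarter_div_mul_rpow_quarter_div hy1 hy2 hy3.le
    · rw [mul_assoc, Real.rpow_neg_quarter_mul_rpow_quarter_div hp hq hr]
      ring
  · have hd := ((hasDerivAt_id' x).sub_const a₂).sqrt hq.ne'
    refine (hd.congr_of_eventuallyEq ?_).congr_deriv ?_
    · filter_upwards [near] with y ⟨hy1, hy2, hy3⟩
      rw [mul_comm (y - a₂)]
      exact Real.rpow_quarter_div_mul_rpow_quarter_div hy1 hy3 hy2.le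
    · rw [mul_assoc, mul_right_comm (x - a₁),
        Real.rpow_neg_quarter_mul_rpow_quarter_div hp hr hq]
      ring
  · have hd := ((hasDerivAt_id' x).sub_const a₁).sqrt hp.ne'
    refine (hd.congr_of_eventuallyEq ?_).congr_deriv ?_
    · filter_upwards [near] with y ⟨hy1, hy2, hy3⟩
      rw [mul_comm (y - a₁) (a₃ - y), mul_comm (y - a₁) (y - a₂)]
      exact Real.rpow_quarter_div_mul_rpow_quarter_div hy2 hy3 hy1.le
    · rw [mul_assoc,
        show (x - a₁) * (x - a₂) * (a₃ - x) = (x - a₂) * (a₃ - x) * (x - a₁) by ring,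
        Real.rpow_neg_quarter_mul_rpow_quarter_div hq hr hp]
      ring

/-- on the interval a₁, a₂ < x < a₃ the Bianchi VIII functions
f₁ = ((x-a₂)(a₃-x))^{1/4}/(x-a₁)^{1/4}, f₂ = ((x-a₁)(a₃-x))^{1/4}/(x-a₂)^{1/4},
f₃ = ((x-a₁)(x-a₂))^{1/4}/(a₃-x)^{1/4}, h = (1/2)((x-a₁)(x-a₂)(a₃-x))^{-1/4}
satisfy (f₁f₂)' = -h f₃, (f₁f₃)' = h f₂, (f₂f₃)' = h f₁. -/
theorem stmt_18 (a₁ a₂ a₃ : ℝ) (ha : a₂ < a₃) (x : ℝ)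
    (h1 : a₁ < x) (h2 : a₂ < x) (h3 : x < a₃) :
    HasDerivAt (fun y => (((y - a₂) * (a₃ - y)) ^ ((1:ℝ)/4) / (y - a₁) ^ ((1:ℝ)/4)) *
        (((y - a₁) * (a₃ - y)) ^ ((1:ℝ)/4) / (y - a₂) ^ ((1:ℝ)/4)))
      (-((1/2) * ((x - a₁) * (x - a₂) * (a₃ - x)) ^ (-(1:ℝ)/4) *
        (((x - a₁) * (x - a₂)) ^ ((1:ℝ)/4) / (a₃ - x) ^ ((1:ℝ)/4)))) x ∧
    HasDerivAt (fun y => (((y - a₂) * (a₃ - y)) ^ ((1:ℝ)/4) / (y - a₁) ^ ((1:ℝ)/4)) *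
        (((y - a₁) * (y - a₂)) ^ ((1:ℝ)/4) / (a₃ - y) ^ ((1:ℝ)/4)))
      ((1/2) * ((x - a₁) * (x - a₂) * (a₃ - x)) ^ (-(1:ℝ)/4) *
        (((x - a₁) * (a₃ - x)) ^ ((1:ℝ)/4) / (x - a₂) ^ ((1:ℝ)/4))) x ∧
    HasDerivAt (fun y => (((y - a₁) * (a₃ - y)) ^ ((1:ℝ)/4) / (y - a₂) ^ ((1:ℝ)/4)) *
        (((y - a₁) * (y - a₂)) ^ ((1:ℝ)/4) / (a₃ - y) ^ ((1:ℝ)/4)))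
      ((1/2) * ((x - a₁) * (x - a₂) * (a₃ - x)) ^ (-(1:ℝ)/4) *
        (((x - a₂) * (a₃ - x)) ^ ((1:ℝ)/4) / (x - a₁) ^ ((1:ℝ)/4))) x :=
  stmt_18_general a₁ a₂ a₃ x h1 h2 h3
end
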